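/- For permutation groups (A,V) and (B,W), the imprimitive wreath product A≀B belongs to GR if and only if (A ∈ GR or A = I_2) and one of the following holds: (1) B ∈ GR or B = I_2; (2) B ∈ DGR, B ∉ GR, B ≠ I_2, and A is intransitive on V. -/

import Mathlib

open scoped Classical

/-- The automorphism group of a colored graph, i.e. of a coloring of the
unordered pairs of distinct elements of `V` (values of `E` on diagonal pairs
are irrelevant). -/
def graphAut {V C : Type} (E : Sym2 V → C) : Subgroup (Equiv.Perm V) where
  carrier := {σ | ∀ v w : V, v ≠ w → E s(σ v, σ w) = E s(v, w)}
  one_mem' := by intro v w _; rfl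
  mul_mem' := by
    intro a b ha hb v w hvw
    have hb' := hb v w hvw
    have ha' := ha (b v) (b w) (fun h => hvw (b.injective h))
    simpa [Equiv.Perm.mul_apply] using ha'.trans hb'
  inv_mem' := by
    intro a ha v w hvw
    have h : a⁻¹ v ≠ a⁻¹ w := fun h => hvw (by simpa using congrArg a h)
    have := ha (a⁻¹ v) (a⁻¹ w) h
    simpa using this.symm

/-- The automorphism group of a colored digraph, i.e. of a coloring of the
ordered pairs of elements of `V`. -/
def digraphAut {V C : Type} (E : V → V → C) : Subgroup (Equiv.Perm V) where
  carrier := {σ | ∀ v w : V, E (σ v) (σ w) = E v w}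
  one_mem' := by intro v w; rfl
  mul_mem' := by
    intro a b ha hb v w
    simpa [Equiv.Perm.mul_apply] using (ha (b v) (b w)).trans (hb v w)
  inv_mem' := by
    intro a ha v w
    simpa using (ha (a⁻¹ v) (a⁻¹ w)).symm

/-- The automorphism group of a colored hypergraph, i.e. of a coloring of the
nonempty subsets of `W`. -/
def hyperAut {W C : Type} (E : Set W → C) : Subgroup (Equiv.Perm W) where
  carrier := {σ | ∀ X : Set W, X.Nonempty → E (⇑σ '' X) = E X}
  one_mem' := by intro X hX; simp
  mul_mem' := by
    intro a b ha hb X hX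
    have h1 : ⇑(a * b) '' X = ⇑a '' (⇑b '' X) := by
      rw [Equiv.Perm.coe_mul, Set.image_comp]
    rw [h1, ha _ (hX.image _), hb _ hX]
  inv_mem' := by
    intro a ha X hX
    have h1 : ⇑a '' (⇑a⁻¹ '' X) = X := by
      rw [← Set.image_comp]
      have : ⇑a ∘ ⇑a⁻¹ = id := by funext x; simp
      rw [this, Set.image_id]
    have := ha (⇑a⁻¹ '' X) (hX.image _)
    rw [h1] at this
    exact this.symm

/-- `A` belongs to the class GR: it is the automorphism group of some colored graph. -/
def IsGR {V : Type} (A : Subgroup (Equiv.Perm V)) : Prop :=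
  ∃ (C : Type) (E : Sym2 V → C), graphAut E = A

/-- `A` belongs to the class DGR: it is the automorphism group of some colored digraph. -/
def IsDGR {V : Type} (A : Subgroup (Equiv.Perm V)) : Prop :=
  ∃ (C : Type) (E : V → V → C), digraphAut E = A

/-- `B` belongs to the class BGR: it is the automorphism group of some colored hypergraph. -/
def IsBGR {W : Type} (B : Subgroup (Equiv.Perm W)) : Prop :=
  ∃ (C : Type) (E : Set W → C), hyperAut E = B

/-- `(A, V)` is (permutation isomorphic to) the trivial permutation group `I₂`
on a two-element set. -/
def IsI2 {V : Type} (A : Subgroup (Equiv.Perm V)) : Prop :=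
  A = ⊥ ∧ Nat.card V = 2

/-- The permutation group `A` acts transitively on `V`. -/
def permTransitive {V : Type} (A : Subgroup (Equiv.Perm V)) : Prop :=
  ∀ v w : V, ∃ a ∈ A, a v = w

/-- The orbit of a point under a permutation group. -/
def ptOrbit {V : Type} (A : Subgroup (Equiv.Perm V)) (v : V) : Set V :=
  {u | ∃ a ∈ A, a v = u}

/-- The orbit (2*-orbital) of an unordered pair under a permutation group. -/
def pairOrbit {V : Type} (A : Subgroup (Equiv.Perm V)) (p : Sym2 V) : Set (Sym2 V) :=
  {q | ∃ a ∈ A, Sym2.map ⇑a p = q}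

/-- The orbital of an ordered pair under a permutation group. -/
def orbital {V : Type} (A : Subgroup (Equiv.Perm V)) (x : V × V) : Set (V × V) :=
  {y | ∃ a ∈ A, (a x.1, a x.2) = y}

/-- The closure `cl(A)` of a permutation group `A`: the group of all permutations of `V`
mapping each 2*-orbital of `A` onto itself. -/
def grCl {V : Type} (A : Subgroup (Equiv.Perm V)) : Subgroup (Equiv.Perm V) where
  carrier := {σ | ∀ p : Sym2 V, ¬ p.IsDiag → Sym2.map ⇑σ '' pairOrbit A p = pairOrbit A p}
  one_mem' := by
    intro p hp
    rw [Equiv.Perm.coe_one, Sym2.map_id, Set.image_id]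
  mul_mem' := by
    intro a b ha hb p hp
    rw [Equiv.Perm.coe_mul, Sym2.map_comp, Set.image_comp, hb p hp, ha p hp]
  inv_mem' := by
    intro a ha p hp
    have h1 : Sym2.map ⇑a⁻¹ ∘ Sym2.map ⇑a = id := by
      rw [← Sym2.map_comp]
      have : ⇑a⁻¹ ∘ ⇑a = id := by funext x; simp
      rw [this, Sym2.map_id]
    conv_lhs => rw [← ha p hp, ← Set.image_comp, h1, Set.image_id]

/-- The permutation `α` transposes the orbitals of `A`: it maps every orbital
onto the orbital paired with it. -/
def TransposesOrbitals {V : Type} (A : Subgroup (Equiv.Perm V)) (α : Equiv.Perm V) : Prop :=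
  ∀ x : V × V, (fun y : V × V => (α y.1, α y.2)) '' orbital A x = Prod.swap '' orbital A x

/-- The rank of a permutation group: the (cardinal) number of its orbitals. -/
def orbRank {V : Type} (A : Subgroup (Equiv.Perm V)) : Cardinal :=
  Cardinal.mk {O : Set (V × V) // ∃ x, O = orbital A x}

/-- `nsp A`: the number of pairs `{O, O'}` of distinct mutually paired
(i.e. non-self-paired) orbitals of `A`. -/
noncomputable def nsp {V : Type} (A : Subgroup (Equiv.Perm V)) : ℕ :=
  Nat.card {O : Set (V × V) // (∃ x, O = orbital A x) ∧ Prod.swap '' O ≠ O} / 2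

/-- The type of orbits of a permutation group `(A, V)` on `V`. -/
def orbitType {V : Type} (A : Subgroup (Equiv.Perm V)) : Type :=
  {O : Set V // ∃ v, O = ptOrbit A v}

/-- The imprimitive wreath product `A ≀ B` of permutation groups `(A,V)` and `(B,W)`,
acting on `V × W`. -/
def imprimWr {V W : Type} (A : Subgroup (Equiv.Perm V)) (B : Subgroup (Equiv.Perm W)) :
    Subgroup (Equiv.Perm (V × W)) where
  carrier := {γ | ∃ β ∈ B, ∃ α : W → Equiv.Perm V, (∀ w, α w ∈ A) ∧
    ∀ p : V × W, γ p = (α p.2 p.1, β p.2)}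
  one_mem' := ⟨1, B.one_mem, fun _ => 1, fun _ => A.one_mem, fun p => rfl⟩
  mul_mem' := by
    rintro γ₁ γ₂ ⟨β₁, hβ₁, α₁, hα₁, h₁⟩ ⟨β₂, hβ₂, α₂, hα₂, h₂⟩
    refine ⟨β₁ * β₂, B.mul_mem hβ₁ hβ₂, fun w => α₁ (β₂ w) * α₂ w,
      fun w => A.mul_mem (hα₁ _) (hα₂ _), fun p => ?_⟩
    have h0 : (γ₁ * γ₂) p = γ₁ (γ₂ p) := rfl
    rw [h0, h₂ p, h₁ (α₂ p.2 p.1, β₂ p.2)]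
    rfl
  inv_mem' := by
    rintro γ ⟨β, hβ, α, hα, h⟩
    refine ⟨β⁻¹, B.inv_mem hβ, fun w => (α (β⁻¹ w))⁻¹,
      fun w => A.inv_mem (hα _), fun p => ?_⟩
    have key : γ ((α (β⁻¹ p.2))⁻¹ p.1, β⁻¹ p.2) = p := by
      rw [h]
      simp
    calc γ⁻¹ p = γ⁻¹ (γ ((α (β⁻¹ p.2))⁻¹ p.1, β⁻¹ p.2)) := by rw [key]
    _ = ((α (β⁻¹ p.2))⁻¹ p.1, β⁻¹ p.2) := by simp

/-- The wreath product `A Wr B` of permutation groups `(A,V)` and `(B,W)` in its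
product action on the set `V^W` of functions `W → V`. -/
def prodWr {V W : Type} (A : Subgroup (Equiv.Perm V)) (B : Subgroup (Equiv.Perm W)) :
    Subgroup (Equiv.Perm (W → V)) where
  carrier := {φ | ∃ β ∈ B, ∃ α : W → Equiv.Perm V, (∀ w, α w ∈ A) ∧
    ∀ (f : W → V) (w : W), φ f w = α w (f (β w))}
  one_mem' := ⟨1, B.one_mem, fun _ => 1, fun _ => A.one_mem, fun f w => rfl⟩
  mul_mem' := by
    rintro φ₁ φ₂ ⟨β₁, hβ₁, α₁, hα₁, h₁⟩ ⟨β₂, hβ₂, α₂, hα₂, h₂⟩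
    refine ⟨β₂ * β₁, B.mul_mem hβ₂ hβ₁, fun w => α₁ w * α₂ (β₁ w),
      fun w => A.mul_mem (hα₁ _) (hα₂ _), fun f w => ?_⟩
    have h0 : (φ₁ * φ₂) f = φ₁ (φ₂ f) := rfl
    rw [h0, h₁ (φ₂ f) w, h₂ f (β₁ w)]
    rfl
  inv_mem' := by
    rintro φ ⟨β, hβ, α, hα, h⟩
    refine ⟨β⁻¹, B.inv_mem hβ, fun w => (α (β⁻¹ w))⁻¹,
      fun w => A.inv_mem (hα _), fun f w => ?_⟩
    have hf : f = φ (φ⁻¹ f) := by simp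
    conv_rhs => rw [hf]
    rw [h (φ⁻¹ f) (β⁻¹ w)]
    simp

/-- The parallel multiple `B × I_T` of a permutation group `(B, W)`, acting on `W × T`. -/
def parMul {W : Type} (B : Subgroup (Equiv.Perm W)) (T : Type) :
    Subgroup (Equiv.Perm (W × T)) where
  carrier := {γ | ∃ β ∈ B, ∀ p : W × T, γ p = (β p.1, p.2)}
  one_mem' := ⟨1, B.one_mem, fun p => rfl⟩
  mul_mem' := by
    rintro γ₁ γ₂ ⟨β₁, hβ₁, h₁⟩ ⟨β₂, hβ₂, h₂⟩
    refine ⟨β₁ * β₂, B.mul_mem hβ₁ hβ₂, fun p => ?_⟩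
    have h0 : (γ₁ * γ₂) p = γ₁ (γ₂ p) := rfl
    rw [h0, h₂, h₁]
    rfl
  inv_mem' := by
    rintro γ ⟨β, hβ, h⟩
    refine ⟨β⁻¹, B.inv_mem hβ, fun p => ?_⟩
    have key : γ (β⁻¹ p.1, p.2) = p := by rw [h]; simp
    calc γ⁻¹ p = γ⁻¹ (γ (β⁻¹ p.1, p.2)) := by rw [key]
    _ = (β⁻¹ p.1, p.2) := by simp

/-- The composition `H2 ∘ H1` of a colored graph `H2` on `W` with a colored graph
`H1` on `V`: a colored graph on `V × W`. -/
noncomputable def compGraph {V W C : Type} (H2 : Sym2 W → C) (H1 : Sym2 V → C) :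
    Sym2 (V × W) → C :=
  Sym2.lift ⟨fun p q => if p.2 = q.2 then H1 s(p.1, q.1) else H2 s(p.2, q.2), by
    intro p q
    dsimp only
    by_cases h : p.2 = q.2
    · rw [if_pos h, if_pos h.symm, Sym2.eq_swap]
    · rw [if_neg h, if_neg (fun hh => h hh.symm), Sym2.eq_swap]⟩

section Aux

variable {V W C : Type}

theorem mem_graphAut {E : Sym2 V → C} {σ : Equiv.Perm V} :
    σ ∈ graphAut E ↔ ∀ v w : V, v ≠ w → E s(σ v, σ w) = E s(v, w) := Iff.rfl

theorem mem_digraphAut {E : V → V → C} {σ : Equiv.Perm V} :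
    σ ∈ digraphAut E ↔ ∀ v w : V, E (σ v) (σ w) = E v w := Iff.rfl

theorem mem_imprimWr {A : Subgroup (Equiv.Perm V)} {B : Subgroup (Equiv.Perm W)}
    {γ : Equiv.Perm (V × W)} :
    γ ∈ imprimWr A B ↔ ∃ β ∈ B, ∃ α : W → Equiv.Perm V, (∀ w, α w ∈ A) ∧
      ∀ p : V × W, γ p = (α p.2 p.1, β p.2) := Iff.rfl

/-- The permutation of `V × W` built from a family of block permutations and a
permutation of blocks. -/
def blockPerm (α : W → Equiv.Perm V) (β : Equiv.Perm W) : Equiv.Perm (V × W) where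
  toFun p := (α p.2 p.1, β p.2)
  invFun p := ((α (β⁻¹ p.2))⁻¹ p.1, β⁻¹ p.2)
  left_inv p := by simp
  right_inv p := by simp

@[simp] theorem blockPerm_apply (α : W → Equiv.Perm V) (β : Equiv.Perm W) (p : V × W) :
    blockPerm α β p = (α p.2 p.1, β p.2) := rfl

theorem blockPerm_mem {A : Subgroup (Equiv.Perm V)} {B : Subgroup (Equiv.Perm W)}
    {α : W → Equiv.Perm V} {β : Equiv.Perm W} (hα : ∀ w, α w ∈ A) (hβ : β ∈ B) :
    blockPerm α β ∈ imprimWr A B :=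
  ⟨β, hβ, α, hα, fun _ => rfl⟩

/-- The constant coloring has full automorphism group. -/
theorem graphAut_const (c : C) : graphAut (fun _ : Sym2 V => c) = ⊤ := by
  ext σ; simp [mem_graphAut]

theorem top_isGR : IsGR (⊤ : Subgroup (Equiv.Perm V)) :=
  ⟨Unit, fun _ => (), by rw [← graphAut_const ()]⟩

/-- The identity coloring on a set with at least three elements has trivial
automorphism group. -/
theorem bot_isGR_of_three {a b c : V} (hab : a ≠ b) (hac : a ≠ c) (hbc : b ≠ c) :
    IsGR (⊥ : Subgroup (Equiv.Perm V)) := by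
  refine ⟨Sym2 V, id, ?_⟩
  ext σ
  simp only [mem_graphAut, Subgroup.mem_bot, id_eq]
  constructor
  · intro h
    ext v
    have h2 : ∀ w, w ≠ v → σ v = v ∨ σ v = w := by
      intro w hw
      rcases Sym2.eq_iff.1 (h v w hw.symm) with ⟨h1, _⟩ | ⟨h1, _⟩
      · exact Or.inl h1
      · exact Or.inr h1
    obtain ⟨w₁, w₂, hw12, hw1, hw2⟩ : ∃ w₁ w₂, w₁ ≠ w₂ ∧ w₁ ≠ v ∧ w₂ ≠ v := by
      by_cases hva : v = a
      · exact ⟨b, c, hbc, fun h => hab (hva ▸ h.symm), fun h => hac (hva ▸ h.symm)⟩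
      · by_cases hvb : v = b
        · exact ⟨a, c, hac, fun h => hab (h.trans hvb), fun h => hbc (h.trans hvb).symm⟩
        · exact ⟨a, b, hab, fun h => hva h.symm, fun h => hvb h.symm⟩
    rcases h2 w₁ hw1 with h' | h'
    · exact h'
    · rcases h2 w₂ hw2 with h'' | h''
      · exact h''
      · exact absurd (h'.symm.trans h'') hw12
  · rintro rfl v w _; rfl

end Aux
section Aux2

variable {V W C Cl : Type}

theorem exists_two_ne {a b c : V} (hab : a ≠ b) (hac : a ≠ c) (hbc : b ≠ c) (v : V) :
    ∃ w₁ w₂, w₁ ≠ w₂ ∧ w₁ ≠ v ∧ w₂ ≠ v := by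
  by_cases hva : v = a
  · exact ⟨b, c, hbc, fun h => hab (hva ▸ h.symm), fun h => hac (hva ▸ h.symm)⟩
  · by_cases hvb : v = b
    · exact ⟨a, c, hac, fun h => hab (h.trans hvb), fun h => hbc (h.trans hvb).symm⟩
    · exact ⟨a, b, hab, fun h => hva h.symm, fun h => hvb h.symm⟩

/-- Rigidity of vertex colors encoded as unordered pairs, on a set with at
least three elements. -/
theorem lambda_rigid {a b c : V} (hab : a ≠ b) (hac : a ≠ c) (hbc : b ≠ c)
    (lam : V → Cl) (σ : Equiv.Perm V)
    (h : ∀ v w : V, v ≠ w → s(lam (σ v), lam (σ w)) = s(lam v, lam w)) :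
    ∀ v, lam (σ v) = lam v := by
  intro v
  by_contra hne
  have key : ∀ w, w ≠ v → lam (σ v) = lam w ∧ lam (σ w) = lam v := by
    intro w hw
    rcases Sym2.eq_iff.1 (h v w hw.symm) with ⟨h1, h2⟩ | ⟨h1, h2⟩
    · exact absurd h1 hne
    · exact ⟨h1, h2⟩
  obtain ⟨w₁, w₂, hw12, hw1, hw2⟩ := exists_two_ne hab hac hbc v
  have k1 := key w₁ hw1
  have k2 := key w₂ hw2
  have h12 := h w₁ w₂ hw12
  rw [k1.2, k2.2] at h12
  rcases Sym2.eq_iff.1 h12 with ⟨h1, _⟩ | ⟨_, h2⟩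
  · exact hne (k1.1.trans h1.symm)
  · exact hne (k1.1.trans h2.symm)

/-- Any subgroup of the symmetric group on a two-element set is `⊥` or `⊤`. -/
theorem subgroup_two {x y : V} (hxy : x ≠ y) (hall : ∀ z : V, z = x ∨ z = y)
    (N : Subgroup (Equiv.Perm V)) : N = ⊥ ∨ N = ⊤ := by
  have hperm : ∀ σ : Equiv.Perm V, σ ≠ 1 → ∀ z, σ z = Equiv.swap x y z := by
    intro σ hσ
    have hsx : σ x = y := by
      rcases hall (σ x) with h | h
      · exfalso
        apply hσ
        ext z
        rcases hall z with rfl | rfl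
        · simpa using h
        · rcases hall (σ z) with h' | h'
          · exact absurd (σ.injective (h'.trans h.symm)) hxy.symm  -- σ z = x = σ x ⇒ z = x, but z = y
          · simpa using h'
      · exact h
    intro z
    have hsy : σ y = x := by
      rcases hall (σ y) with h | h
      · exact h
      · exact absurd (σ.injective (h.trans hsx.symm)) hxy.symm
    rcases hall z with rfl | rfl
    · rw [hsx, Equiv.swap_apply_left]
    · rw [hsy, Equiv.swap_apply_right]
  by_cases hbot : ∀ σ ∈ N, σ = 1
  · left
    exact (Subgroup.eq_bot_iff_forall N).2 hbot
  · right
    push_neg at hbot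
    obtain ⟨f, hfN, hf1⟩ := hbot
    rw [eq_top_iff]
    intro σ _
    by_cases hσ : σ = 1
    · exact hσ ▸ N.one_mem
    · have : σ = f := by
        ext z
        rw [hperm σ hσ z, hperm f hf1 z]
      exact this ▸ hfN
theorem card_two_of {x y : V} (hxy : x ≠ y) (hall : ∀ z : V, z = x ∨ z = y) :
    Nat.card V = 2 := by
  rw [Nat.card_eq_two_iff]
  refine ⟨x, y, hxy, ?_⟩
  ext z
  simpa using hall z

/-- The main pipeline: a group which is the automorphism group of a
vertex-and-edge colored graph is in GR or is I₂. -/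
theorem gr_or_i2_of_char [Nontrivial V] (N : Subgroup (Equiv.Perm V))
    (F : Sym2 V → C) (lam : V → Cl)
    (h : ∀ σ : Equiv.Perm V, σ ∈ N ↔
      ((∀ v w : V, v ≠ w → F s(σ v, σ w) = F s(v, w)) ∧ ∀ v, lam (σ v) = lam v)) :
    IsGR N ∨ IsI2 N := by
  by_cases h3 : ∃ a b c : V, a ≠ b ∧ a ≠ c ∧ b ≠ c
  · obtain ⟨a, b, c, hab, hac, hbc⟩ := h3
    left
    refine ⟨C × Sym2 Cl, fun p => (F p, Sym2.map lam p), ?_⟩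
    ext σ
    rw [mem_graphAut, h σ]
    constructor
    · intro hE
      have hF : ∀ v w : V, v ≠ w → F s(σ v, σ w) = F s(v, w) := by
        intro v w hvw
        exact (Prod.mk.injEq _ _ _ _ ▸ hE v w hvw).1
      have hl : ∀ v w : V, v ≠ w → s(lam (σ v), lam (σ w)) = s(lam v, lam w) := by
        intro v w hvw
        have := (Prod.mk.injEq _ _ _ _ ▸ hE v w hvw).2
        rwa [Sym2.map_pair_eq, Sym2.map_pair_eq] at this
      exact ⟨hF, lambda_rigid hab hac hbc lam σ hl⟩
    · rintro ⟨hF, hl⟩ v w hvw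
      rw [Prod.mk.injEq]
      refine ⟨hF v w hvw, ?_⟩
      rw [Sym2.map_pair_eq, Sym2.map_pair_eq, hl v, hl w]
  · push_neg at h3
    obtain ⟨x, y, hxy⟩ := exists_pair_ne V
    have hall : ∀ z : V, z = x ∨ z = y := by
      intro z
      by_contra hz
      push_neg at hz
      exact hz.2 (h3 x y z hxy (Ne.symm hz.1)).symm
    rcases subgroup_two hxy hall N with hN | hN
    · right
      exact ⟨hN, card_two_of hxy hall⟩
    · left
      exact hN ▸ top_isGR

end Aux2
section Aux3

variable {V W C : Type}

/-- Block decomposition: if the coloring distinguishes in-block pairs from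
cross-block pairs, every automorphism decomposes as a block permutation. -/
theorem blockDecomp [Nontrivial V] (E : Sym2 (V × W) → C) (P : C → Prop)
    (hP : ∀ p q : V × W, p ≠ q → (P (E s(p, q)) ↔ p.2 = q.2))
    {σ : Equiv.Perm (V × W)} (hσ : σ ∈ graphAut E) :
    ∃ (β : Equiv.Perm W) (α : W → Equiv.Perm V), ∀ p : V × W, σ p = (α p.2 p.1, β p.2) := by
  have h2 : ∀ p q : V × W, (σ p).2 = (σ q).2 ↔ p.2 = q.2 := by
    intro p q
    by_cases hpq : p = q
    · subst hpq; simp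
    · have hσpq : σ p ≠ σ q := fun h => hpq (σ.injective h)
      have hc : E s(σ p, σ q) = E s(p, q) := hσ p q hpq
      rw [← hP p q hpq, ← hc, hP (σ p) (σ q) hσpq]
  obtain ⟨v₀⟩ : Nonempty V := inferInstance
  have hkconst : ∀ v w, (σ (v, w)).2 = (σ (v₀, w)).2 :=
    fun v w => (h2 (v, w) (v₀, w)).2 rfl
  set β₀ : W → W := fun w => (σ (v₀, w)).2 with hβ₀
  have hβ₀inj : Function.Injective β₀ := fun w w' h => (h2 (v₀, w) (v₀, w')).1 h
  have hβ₀surj : Function.Surjective β₀ := by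
    intro w'
    refine ⟨(σ.symm (v₀, w')).2, ?_⟩
    calc β₀ (σ.symm (v₀, w')).2
        = (σ ((σ.symm (v₀, w')).1, (σ.symm (v₀, w')).2)).2 := (hkconst _ _).symm
      _ = (σ (σ.symm (v₀, w'))).2 := rfl
      _ = w' := by rw [Equiv.apply_symm_apply]
  have hfbij : ∀ w, Function.Bijective (fun v => (σ (v, w)).1) := by
    intro w
    constructor
    · intro v v' h
      have heq : σ (v, w) = σ (v', w) := Prod.ext h ((h2 (v, w) (v', w)).2 rfl)
      exact (Prod.ext_iff.1 (σ.injective heq)).1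
    · intro u
      set q := σ.symm (u, β₀ w) with hq
      have hσq : σ q = (u, β₀ w) := Equiv.apply_symm_apply σ _
      have hq2 : q.2 = w := by
        apply hβ₀inj
        calc β₀ q.2 = (σ (q.1, q.2)).2 := (hkconst _ _).symm
          _ = (σ q).2 := rfl
          _ = β₀ w := by rw [hσq]
      refine ⟨q.1, ?_⟩
      show (σ (q.1, w)).1 = u
      rw [← hq2]
      show (σ q).1 = u
      rw [hσq]
  refine ⟨Equiv.ofBijective β₀ ⟨hβ₀inj, hβ₀surj⟩,
    fun w => Equiv.ofBijective _ (hfbij w), fun p => ?_⟩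
  rw [Equiv.ofBijective_apply]
  exact Prod.ext rfl (hkconst p.1 p.2)

end Aux3
section Aux4

variable {V W C1 C2 : Type}

/-- Construction I: `A, B ∈ GR` implies `A ≀ B ∈ GR`. -/
theorem constrI [Nontrivial V] [Nontrivial W]
    {A : Subgroup (Equiv.Perm V)} {B : Subgroup (Equiv.Perm W)}
    (H1 : Sym2 V → C1) (H2 : Sym2 W → C2)
    (hA : graphAut H1 = A) (hB : graphAut H2 = B) : IsGR (imprimWr A B) := by
  subst hA; subst hB
  refine ⟨C1 ⊕ C2, Sym2.lift ⟨fun p q =>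
    if p.2 = q.2 then Sum.inl (H1 s(p.1, q.1)) else Sum.inr (H2 s(p.2, q.2)), ?_⟩, ?_⟩
  · intro p q
    dsimp only
    by_cases h : p.2 = q.2
    · rw [if_pos h, if_pos h.symm, Sym2.eq_swap]
    · rw [if_neg h, if_neg (fun hh => h hh.symm), Sym2.eq_swap]
  · ext σ
    constructor
    · intro hσ
      have hP : ∀ p q : V × W, p ≠ q →
          ((Sym2.lift ⟨fun p q : V × W =>
            if p.2 = q.2 then Sum.inl (H1 s(p.1, q.1)) else Sum.inr (H2 s(p.2, q.2)), by
              intro p q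
              dsimp only
              by_cases h : p.2 = q.2
              · rw [if_pos h, if_pos h.symm, Sym2.eq_swap]
              · rw [if_neg h, if_neg (fun hh => h hh.symm), Sym2.eq_swap]⟩ s(p, q)).isLeft = true
            ↔ p.2 = q.2) := by
        intro p q hpq
        rw [Sym2.lift_mk]
        dsimp only
        by_cases h : p.2 = q.2
        · simp [h]
        · simp [h]
      obtain ⟨β, α, hform⟩ := blockDecomp _ (fun c => c.isLeft = true) hP hσ
      have hα : ∀ w, α w ∈ graphAut H1 := by
        intro w v v' hvv'
        have h := hσ (v, w) (v', w) (fun hh => hvv' (Prod.ext_iff.1 hh).1)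
        rw [hform, hform, Sym2.lift_mk, Sym2.lift_mk] at h
        dsimp only at h
        rw [if_pos rfl, if_pos rfl] at h
        exact Sum.inl_injective h
      have hβ : β ∈ graphAut H2 := by
        intro w w' hww'
        obtain ⟨v₀⟩ : Nonempty V := inferInstance
        have h := hσ (v₀, w) (v₀, w') (fun hh => hww' (Prod.ext_iff.1 hh).2)
        rw [hform, hform, Sym2.lift_mk, Sym2.lift_mk] at h
        dsimp only at h
        rw [if_neg (β.injective.ne hww'), if_neg hww'] at h
        exact Sum.inr_injective h
      exact ⟨β, hβ, α, hα, hform⟩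
    · rintro ⟨β, hβ, α, hα, hform⟩ p q hpq
      rw [hform, hform, Sym2.lift_mk, Sym2.lift_mk]
      dsimp only
      by_cases h : p.2 = q.2
      · rw [if_pos h, if_pos (show β p.2 = β q.2 by rw [h])]
        rw [← h]
        have hp1 : p.1 ≠ q.1 := fun hh => hpq (Prod.ext hh h)
        rw [hα p.2 p.1 q.1 hp1]
      · rw [if_neg h, if_neg (β.injective.ne h)]
        rw [hβ p.2 q.2 h]

end Aux4
section Aux5

variable {V W C1 C2 : Type}

/-- Construction II: `⊥ ≀ B ∈ GR` whenever `B ∈ GR`. -/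
theorem constrII [Nontrivial V] [Nontrivial W]
    {B : Subgroup (Equiv.Perm W)} (H2 : Sym2 W → C2)
    (hB : graphAut H2 = B) : IsGR (imprimWr (⊥ : Subgroup (Equiv.Perm V)) B) := by
  subst hB
  refine ⟨Unit ⊕ (C2 × Sym2 V), Sym2.lift ⟨fun p q =>
    if p.2 = q.2 then Sum.inl () else Sum.inr (H2 s(p.2, q.2), s(p.1, q.1)), ?_⟩, ?_⟩
  · intro p q
    dsimp only
    by_cases h : p.2 = q.2
    · rw [if_pos h, if_pos h.symm]
    · rw [if_neg h, if_neg (fun hh => h hh.symm), Sym2.eq_swap, @Sym2.eq_swap _ p.1]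
  · ext σ
    constructor
    · intro hσ
      have hP : ∀ p q : V × W, p ≠ q →
          ((Sym2.lift ⟨fun p q : V × W =>
            if p.2 = q.2 then Sum.inl () else Sum.inr (H2 s(p.2, q.2), s(p.1, q.1)), by
              intro p q
              dsimp only
              by_cases h : p.2 = q.2
              · rw [if_pos h, if_pos h.symm]
              · rw [if_neg h, if_neg (fun hh => h hh.symm), Sym2.eq_swap,
                  @Sym2.eq_swap _ p.1]⟩ s(p, q)).isLeft = true ↔ p.2 = q.2) := by
        intro p q hpq
        rw [Sym2.lift_mk]
        dsimp only
        by_cases h : p.2 = q.2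
        · simp [h]
        · simp [h]
      obtain ⟨β, α, hform⟩ := blockDecomp _ (fun c => c.isLeft = true) hP hσ
      have hα : ∀ w, α w = 1 := by
        intro w
        ext v
        obtain ⟨w', hw'⟩ := exists_ne w
        have h := hσ (v, w) (v, w') (fun hh => hw'.symm ((Prod.ext_iff.1 hh).2))
        rw [hform, hform, Sym2.lift_mk, Sym2.lift_mk] at h
        dsimp only at h
        rw [if_neg (fun hh => hw'.symm (β.injective hh)), if_neg (Ne.symm hw')] at h
        have h2 := (Prod.ext_iff.1 (Sum.inr_injective h)).2
        rcases Sym2.eq_iff.1 h2 with ⟨h3, _⟩ | ⟨h3, _⟩ <;> simpa using h3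
      have hβ : β ∈ graphAut H2 := by
        intro w w' hww'
        obtain ⟨v₀⟩ : Nonempty V := inferInstance
        have h := hσ (v₀, w) (v₀, w') (fun hh => hww' (Prod.ext_iff.1 hh).2)
        rw [hform, hform, Sym2.lift_mk, Sym2.lift_mk] at h
        dsimp only at h
        rw [if_neg (β.injective.ne hww'), if_neg hww'] at h
        exact (Prod.ext_iff.1 (Sum.inr_injective h)).1
      exact ⟨β, hβ, α, fun w => by rw [hα w]; exact Subgroup.one_mem _, hform⟩
    · rintro ⟨β, hβ, α, hα, hform⟩ p q hpq
      rw [hform, hform, Sym2.lift_mk, Sym2.lift_mk]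
      dsimp only
      by_cases h : p.2 = q.2
      · rw [if_pos h, if_pos (show β p.2 = β q.2 by rw [h])]
      · rw [if_neg h, if_neg (β.injective.ne h), hβ p.2 q.2 h,
          Subgroup.mem_bot.1 (hα p.2), Subgroup.mem_bot.1 (hα q.2)]
        simp

/-- Construction III: `A ≀ ⊥ ∈ GR` whenever `A ∈ GR`. -/
theorem constrIII [Nontrivial V] [Nontrivial W]
    {A : Subgroup (Equiv.Perm V)} (H1 : Sym2 V → C1)
    (hA : graphAut H1 = A) : IsGR (imprimWr A (⊥ : Subgroup (Equiv.Perm W))) := by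
  subst hA
  refine ⟨(C1 × W) ⊕ Unit, Sym2.lift ⟨fun p q =>
    if p.2 = q.2 then Sum.inl (H1 s(p.1, q.1), p.2) else Sum.inr (), ?_⟩, ?_⟩
  · intro p q
    dsimp only
    by_cases h : p.2 = q.2
    · rw [if_pos h, if_pos h.symm, Sym2.eq_swap, h]
    · rw [if_neg h, if_neg (fun hh => h hh.symm)]
  · ext σ
    constructor
    · intro hσ
      have hP : ∀ p q : V × W, p ≠ q →
          ((Sym2.lift ⟨fun p q : V × W =>
            if p.2 = q.2 then Sum.inl (H1 s(p.1, q.1), p.2) else Sum.inr (), by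
              intro p q
              dsimp only
              by_cases h : p.2 = q.2
              · rw [if_pos h, if_pos h.symm, Sym2.eq_swap, h]
              · rw [if_neg h, if_neg (fun hh => h hh.symm)]⟩ s(p, q)).isLeft = true
            ↔ p.2 = q.2) := by
        intro p q hpq
        rw [Sym2.lift_mk]
        dsimp only
        by_cases h : p.2 = q.2
        · simp [h]
        · simp [h]
      obtain ⟨β, α, hform⟩ := blockDecomp _ (fun c => c.isLeft = true) hP hσ
      obtain ⟨v, v', hvv'⟩ := exists_pair_ne V
      have hα : ∀ w, α w ∈ graphAut H1 := by
        intro w u u' huu'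
        have h := hσ (u, w) (u', w) (fun hh => huu' (Prod.ext_iff.1 hh).1)
        rw [hform, hform, Sym2.lift_mk, Sym2.lift_mk] at h
        dsimp only at h
        rw [if_pos rfl, if_pos rfl] at h
        exact (Prod.ext_iff.1 (Sum.inl_injective h)).1
      have hβ : β = 1 := by
        ext w
        have h := hσ (v, w) (v', w) (fun hh => hvv' (Prod.ext_iff.1 hh).1)
        rw [hform, hform, Sym2.lift_mk, Sym2.lift_mk] at h
        dsimp only at h
        rw [if_pos rfl, if_pos rfl] at h
        simpa using (Prod.ext_iff.1 (Sum.inl_injective h)).2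
      exact ⟨β, by rw [hβ]; exact Subgroup.one_mem _, α, hα, hform⟩
    · rintro ⟨β, hβ, α, hα, hform⟩ p q hpq
      rw [hform, hform, Sym2.lift_mk, Sym2.lift_mk]
      dsimp only
      have hβ1 : β = 1 := Subgroup.mem_bot.1 hβ
      by_cases h : p.2 = q.2
      · rw [if_pos h, if_pos (show β p.2 = β q.2 by rw [h])]
        have hp1 : p.1 ≠ q.1 := fun hh => hpq (Prod.ext hh h)
        rw [← h, hα p.2 p.1 q.1 hp1, hβ1]
        simp
      · rw [if_neg h, if_neg (β.injective.ne h)]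

theorem imprimWr_bot_bot [Nontrivial V] [Nontrivial W] :
    imprimWr (⊥ : Subgroup (Equiv.Perm V)) (⊥ : Subgroup (Equiv.Perm W)) = ⊥ := by
  ext γ
  constructor
  · rintro ⟨β, hβ, α, hα, hform⟩
    rw [Subgroup.mem_bot]
    refine Equiv.ext fun p => ?_
    rw [hform p, Subgroup.mem_bot.1 (hα p.2), Subgroup.mem_bot.1 hβ]
    simp
  · rintro h
    rw [Subgroup.mem_bot] at h
    subst h
    exact Subgroup.one_mem _

/-- Construction IV: `⊥ ≀ ⊥ ∈ GR`. -/
theorem constrIV [Nontrivial V] [Nontrivial W] :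
    IsGR (imprimWr (⊥ : Subgroup (Equiv.Perm V)) (⊥ : Subgroup (Equiv.Perm W))) := by
  rw [imprimWr_bot_bot]
  obtain ⟨x, y, hxy⟩ := exists_pair_ne V
  obtain ⟨a, b, hab⟩ := exists_pair_ne W
  exact bot_isGR_of_three (a := (x, a)) (b := (y, a)) (c := (x, b))
    (fun h => hxy (Prod.ext_iff.1 h).1) (fun h => hab (Prod.ext_iff.1 h).2)
    (fun h => hab (Prod.ext_iff.1 h).2)

end Aux5
section Aux6

variable {V W C1 C2 : Type}

/-- Construction V (GR variant): `A ∈ GR` intransitive-style with invariant set,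
`B ∈ DGR` implies `A ≀ B ∈ GR`. -/
theorem constrV_GR [Nontrivial V] [Nontrivial W]
    {A : Subgroup (Equiv.Perm V)} {B : Subgroup (Equiv.Perm W)}
    (H1 : Sym2 V → C1) (D : W → W → C2)
    (hA : graphAut H1 = A) (hB : digraphAut D = B)
    (S : Set V) (v₀ v₁ : V) (h₀ : v₀ ∈ S) (h₁ : v₁ ∉ S)
    (hinv : ∀ σ ∈ A, ∀ v, σ v ∈ S ↔ v ∈ S) : IsGR (imprimWr A B) := by
  classical
  subst hA; subst hB
  set χ : V → Bool := fun v => if v ∈ S then true else false with hχ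
  have hχ₀ : χ v₀ = true := by simp [hχ, h₀]
  have hχ₁ : χ v₁ = false := by simp [hχ, h₁]
  have hχinv : ∀ σ ∈ graphAut H1, ∀ v, χ (σ v) = χ v := by
    intro σ hσ v
    by_cases hv : v ∈ S
    · simp [hχ, hv, (hinv σ hσ v).2 hv]
    · have h2 : σ v ∉ S := fun h => hv ((hinv σ hσ v).1 h)
      simp [hχ, hv, h2]
  set f : (V × W) → (V × W) → ((C1 × C2) ⊕ Sym2 (C2 × Bool)) := fun p q =>
    if p.2 = q.2 then Sum.inl (H1 s(p.1, q.1), D p.2 p.2)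
    else Sum.inr s((D p.2 q.2, χ q.1), (D q.2 p.2, χ p.1)) with hf
  have hsym : ∀ p q, f p q = f q p := by
    intro p q
    rw [hf]
    dsimp only
    by_cases h : p.2 = q.2
    · rw [if_pos h, if_pos h.symm, Sym2.eq_swap, h]
    · rw [if_neg h, if_neg (fun hh => h hh.symm), Sym2.eq_swap]
  refine ⟨_, Sym2.lift ⟨f, hsym⟩, ?_⟩
  have hmk : ∀ p q : V × W, Sym2.lift ⟨f, hsym⟩ s(p, q) = f p q := fun p q => Sym2.lift_mk _ _ _
  ext σ
  constructor
  · intro hσ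
    have hP : ∀ p q : V × W, p ≠ q →
        ((Sym2.lift ⟨f, hsym⟩ s(p, q)).isLeft = true ↔ p.2 = q.2) := by
      intro p q hpq
      rw [hmk, hf]
      dsimp only
      by_cases h : p.2 = q.2
      · simp [h]
      · simp [h]
    obtain ⟨β, α, hform⟩ := blockDecomp _ (fun c => c.isLeft = true) hP hσ
    obtain ⟨u₀, u₁, hu⟩ := exists_pair_ne V
    have hblock : ∀ w (u u' : V), u ≠ u' →
        (Sum.inl (H1 s(α w u, α w u'), D (β w) (β w)) : (C1 × C2) ⊕ Sym2 (C2 × Bool))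
          = Sum.inl (H1 s(u, u'), D w w) := by
      intro w u u' huu'
      have h := hσ (u, w) (u', w) (fun hh => huu' (Prod.ext_iff.1 hh).1)
      rw [hform, hform, hmk, hmk, hf] at h
      dsimp only at h
      rwa [if_pos rfl, if_pos rfl] at h
    have hα : ∀ w, α w ∈ graphAut H1 := by
      intro w u u' huu'
      exact (Prod.ext_iff.1 (Sum.inl_injective (hblock w u u' huu'))).1
    have hDdiag : ∀ w, D (β w) (β w) = D w w := by
      intro w
      exact (Prod.ext_iff.1 (Sum.inl_injective (hblock w u₀ u₁ hu))).2
    have hχα : ∀ w v, χ (α w v) = χ v := fun w v => hχinv _ (hα w) v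
    have hDcross : ∀ w w', w ≠ w' → D (β w) (β w') = D w w' := by
      intro w w' hww'
      have h := hσ (v₁, w) (v₀, w') (fun hh => hww' (Prod.ext_iff.1 hh).2)
      rw [hform, hform, hmk, hmk, hf] at h
      dsimp only at h
      rw [if_neg (β.injective.ne hww'), if_neg hww'] at h
      have h2 := Sum.inr_injective h
      rw [hχα, hχα, hχ₀, hχ₁] at h2
      rcases Sym2.eq_iff.1 h2 with ⟨e1, _⟩ | ⟨e1, _⟩
      · exact (Prod.ext_iff.1 e1).1
      · exact absurd (Prod.ext_iff.1 e1).2 (by simp)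
    have hβB : β ∈ digraphAut D := by
      intro w w'
      by_cases h : w = w'
      · subst h; exact hDdiag w
      · exact hDcross w w' h
    exact ⟨β, hβB, α, hα, hform⟩
  · rintro ⟨β, hβ, α, hα, hform⟩ p q hpq
    rw [hform, hform, hmk, hmk, hf]
    dsimp only
    by_cases h : p.2 = q.2
    · rw [if_pos h, if_pos (show β p.2 = β q.2 by rw [h]), ← h]
      have hp1 : p.1 ≠ q.1 := fun hh => hpq (Prod.ext hh h)
      rw [mem_graphAut.1 (hα p.2) p.1 q.1 hp1, mem_digraphAut.1 hβ p.2 p.2]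
    · rw [if_neg h, if_neg (β.injective.ne h), mem_digraphAut.1 hβ p.2 q.2,
        mem_digraphAut.1 hβ q.2 p.2, hχinv _ (hα q.2) q.1, hχinv _ (hα p.2) p.1]

/-- Construction V (I₂ variant): `A = ⊥` on a two-element set,
`B ∈ DGR` implies `A ≀ B ∈ GR`. -/
theorem constrV_I2 [Nontrivial V] [Nontrivial W]
    {B : Subgroup (Equiv.Perm W)} (D : W → W → C2) (hB : digraphAut D = B)
    (x y : V) (hxy : x ≠ y) (hall : ∀ z : V, z = x ∨ z = y) :
    IsGR (imprimWr (⊥ : Subgroup (Equiv.Perm V)) B) := by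
  classical
  subst hB
  set χ : V → Bool := fun v => if v = x then true else false with hχ
  have hχx : χ x = true := by simp [hχ]
  have hχy : χ y = false := by simp [hχ, hxy.symm]
  have hχtrue : ∀ v, χ v = true → v = x := by
    intro v hv
    by_contra hvx
    simp [hχ, hvx] at hv
  set f : (V × W) → (V × W) → (C2 ⊕ Sym2 (C2 × Bool)) := fun p q =>
    if p.2 = q.2 then Sum.inl (D p.2 p.2)
    else Sum.inr s((D p.2 q.2, χ q.1), (D q.2 p.2, χ p.1)) with hf
  have hsym : ∀ p q, f p q = f q p := by
    intro p q
    rw [hf]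
    dsimp only
    by_cases h : p.2 = q.2
    · rw [if_pos h, if_pos h.symm, h]
    · rw [if_neg h, if_neg (fun hh => h hh.symm), Sym2.eq_swap]
  refine ⟨_, Sym2.lift ⟨f, hsym⟩, ?_⟩
  have hmk : ∀ p q : V × W, Sym2.lift ⟨f, hsym⟩ s(p, q) = f p q := fun p q => Sym2.lift_mk _ _ _
  ext σ
  constructor
  · intro hσ
    have hP : ∀ p q : V × W, p ≠ q →
        ((Sym2.lift ⟨f, hsym⟩ s(p, q)).isLeft = true ↔ p.2 = q.2) := by
      intro p q hpq
      rw [hmk, hf]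
      dsimp only
      by_cases h : p.2 = q.2
      · simp [h]
      · simp [h]
    obtain ⟨β, α, hform⟩ := blockDecomp _ (fun c => c.isLeft = true) hP hσ
    have hcross : ∀ (v v' : V) (w w' : W), w ≠ w' →
        s((D (β w) (β w'), χ (α w' v')), (D (β w') (β w), χ (α w v)))
          = s((D w w', χ v'), (D w' w, χ v)) := by
      intro v v' w w' hww'
      have h := hσ (v, w) (v', w') (fun hh => hww' (Prod.ext_iff.1 hh).2)
      rw [hform, hform, hmk, hmk, hf] at h
      dsimp only at h
      rw [if_neg (β.injective.ne hww'), if_neg hww'] at h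
      exact Sum.inr_injective h
    have hα1 : ∀ w, α w = 1 := by
      have hfix : ∀ w, α w x = x := by
        intro w
        obtain ⟨w', hw'⟩ := exists_ne w
        have h := hcross x x w w' (Ne.symm hw')
        rw [hχx] at h
        apply hχtrue
        rcases Sym2.eq_iff.1 h with ⟨_, e2⟩ | ⟨_, e2⟩ <;>
          exact (Prod.ext_iff.1 e2).2
      intro w
      ext z
      rcases hall z with hz | hz
      · rw [hz]
        simpa using hfix w
      · rw [hz, Equiv.Perm.one_apply]
        have hne : α w y ≠ x := fun h => hxy ((α w).injective (h.trans (hfix w).symm)).symm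
        rcases hall (α w y) with h | h
        · exact absurd h hne
        · exact h
    have hDdiag : ∀ w, D (β w) (β w) = D w w := by
      intro w
      have h := hσ (x, w) (y, w) (fun hh => hxy (Prod.ext_iff.1 hh).1)
      rw [hform, hform, hmk, hmk, hf] at h
      dsimp only at h
      rw [if_pos rfl, if_pos rfl] at h
      exact Sum.inl_injective h
    have hDcross : ∀ w w', w ≠ w' → D (β w) (β w') = D w w' := by
      intro w w' hww'
      have h := hcross y x w w' hww'
      rw [hα1 w, hα1 w'] at h
      simp only [Equiv.Perm.one_apply] at h
      rw [hχx, hχy] at h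
      rcases Sym2.eq_iff.1 h with ⟨e1, _⟩ | ⟨e1, _⟩
      · exact (Prod.ext_iff.1 e1).1
      · exact absurd (Prod.ext_iff.1 e1).2 (by simp)
    have hβB : β ∈ digraphAut D := by
      intro w w'
      by_cases h : w = w'
      · subst h; exact hDdiag w
      · exact hDcross w w' h
    exact ⟨β, hβB, α, fun w => Subgroup.mem_bot.2 (hα1 w), hform⟩
  · rintro ⟨β, hβ, α, hα, hform⟩ p q hpq
    rw [hform, hform, hmk, hmk, hf]
    dsimp only
    by_cases h : p.2 = q.2
    · rw [if_pos h, if_pos (show β p.2 = β q.2 by rw [h]), mem_digraphAut.1 hβ p.2 p.2]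
    · rw [if_neg h, if_neg (β.injective.ne h), mem_digraphAut.1 hβ p.2 q.2,
        mem_digraphAut.1 hβ q.2 p.2, Subgroup.mem_bot.1 (hα p.2), Subgroup.mem_bot.1 (hα q.2)]
      simp

end Aux6
section Aux7

variable {V W C : Type}

/-- Forward direction for `A`. -/
theorem fwdA [Nontrivial V] [Nontrivial W]
    {A : Subgroup (Equiv.Perm V)} {B : Subgroup (Equiv.Perm W)}
    (E : Sym2 (V × W) → C) (hE : graphAut E = imprimWr A B) : IsGR A ∨ IsI2 A := by
  classical
  obtain ⟨w₀⟩ : Nonempty W := inferInstance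
  set F : Sym2 V → C := fun p => E (Sym2.map (fun v => (v, w₀)) p) with hF
  set lam : V → V → W → Option C := fun v u w =>
    if w = w₀ then none else some (E s((v, w₀), (u, w))) with hlam
  apply gr_or_i2_of_char A F lam
  intro g
  have hγ₀ : ∀ v : V, blockPerm (fun w => if w = w₀ then g else 1) 1 (v, w₀) = (g v, w₀) := by
    intro v; simp
  have hγn : ∀ (u : V) (w : W), w ≠ w₀ →
      blockPerm (fun w => if w = w₀ then g else 1) 1 (u, w) = (u, w) := by
    intro u w hw; simp [hw]
  have hmem : g ∈ A ↔ blockPerm (fun w => if w = w₀ then g else 1) 1 ∈ imprimWr A B := by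
    constructor
    · intro hg
      refine blockPerm_mem (fun w => ?_) B.one_mem
      by_cases h : w = w₀
      · rw [if_pos h]; exact hg
      · rw [if_neg h]; exact A.one_mem
    · rintro ⟨β, hβ, α, hα, hform⟩
      have hgα : g = α w₀ := by
        refine Equiv.ext fun v => ?_
        have h := (hform (v, w₀)).symm.trans (hγ₀ v)
        exact ((Prod.ext_iff.1 h).1).symm
      rw [hgα]; exact hα w₀
  rw [hmem, ← hE]
  constructor
  · intro hγE
    constructor
    · intro v w hvw
      have h := hγE (v, w₀) (w, w₀) (fun hh => hvw (Prod.ext_iff.1 hh).1)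
      rw [hγ₀, hγ₀] at h
      rw [hF]
      dsimp only
      rw [Sym2.map_pair_eq, Sym2.map_pair_eq]
      exact h
    · intro v
      funext u w
      rw [hlam]
      dsimp only
      by_cases hw : w = w₀
      · rw [if_pos hw, if_pos hw]
      · rw [if_neg hw, if_neg hw]
        have h := hγE (v, w₀) (u, w) (fun hh => hw ((Prod.ext_iff.1 hh).2).symm)
        rw [hγ₀, hγn u w hw] at h
        rw [h]
  · rintro ⟨hFp, hlamp⟩ p q hpq
    obtain ⟨pv, pw⟩ := p
    obtain ⟨qv, qw⟩ := q
    by_cases hp : pw = w₀ <;> by_cases hq : qw = w₀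
    · subst hp; subst hq
      have hv : pv ≠ qv := fun hh => hpq (by rw [hh])
      have h := hFp pv qv hv
      rw [hF] at h
      dsimp only at h
      rw [Sym2.map_pair_eq, Sym2.map_pair_eq] at h
      rw [hγ₀, hγ₀]
      exact h
    · subst hp
      rw [hγ₀, hγn qv qw hq]
      have h2 := congrFun (congrFun (hlamp pv) qv) qw
      rw [hlam] at h2
      dsimp only at h2
      rw [if_neg hq, if_neg hq] at h2
      exact Option.some_injective _ h2
    · rw [hq, hγ₀, hγn pv pw hp]
      have h2 := congrFun (congrFun (hlamp qv) pv) pw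
      rw [hlam] at h2
      dsimp only at h2
      rw [if_neg hp, if_neg hp] at h2
      have h3 := Option.some_injective _ h2
      rw [show s(((pv, pw) : V × W), ((g qv, w₀) : V × W)) = s((g qv, w₀), (pv, pw)) from
        Sym2.eq_swap, show s(((pv, pw) : V × W), ((qv, w₀) : V × W)) = s((qv, w₀), (pv, pw)) from
        Sym2.eq_swap]
      exact h3
    · rw [hγn pv pw hp, hγn qv qw hq]

/-- Forward direction: `B ∈ DGR` always. -/
theorem fwdB1 [Nontrivial V] [Nontrivial W]
    {A : Subgroup (Equiv.Perm V)} {B : Subgroup (Equiv.Perm W)}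
    (E : Sym2 (V × W) → C) (hE : graphAut E = imprimWr A B) : IsDGR B := by
  classical
  refine ⟨V → V → Option C, fun w w' v v' =>
    if (v, w) = (v', w') then none else some (E s((v, w), (v', w'))), ?_⟩
  ext β
  constructor
  · intro hβ
    have hγ : blockPerm (fun _ => (1 : Equiv.Perm V)) β ∈ graphAut E := by
      intro p q hpq
      obtain ⟨pv, pw⟩ := p
      obtain ⟨qv, qw⟩ := q
      have h := congrFun (congrFun (mem_digraphAut.1 hβ pw qw) pv) qv
      rw [if_neg hpq, if_neg (fun hh : (pv, β pw) = (qv, β qw) =>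
        hpq (Prod.ext (Prod.ext_iff.1 hh).1 (β.injective (Prod.ext_iff.1 hh).2)))] at h
      have h2 := Option.some_injective _ h
      simpa [blockPerm_apply] using h2
    rw [hE] at hγ
    obtain ⟨β', hβ', α, hα, hform⟩ := hγ
    have : β = β' := by
      obtain ⟨v₀⟩ : Nonempty V := inferInstance
      refine Equiv.ext fun w => ?_
      have h := hform (v₀, w)
      simpa [blockPerm_apply] using (Prod.ext_iff.1 h).2
    rw [this]; exact hβ'
  · intro hβ
    have hγm : blockPerm (fun _ => (1 : Equiv.Perm V)) β ∈ graphAut E := by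
      rw [hE]; exact blockPerm_mem (fun _ => A.one_mem) hβ
    refine mem_digraphAut.2 fun w w' => ?_
    funext v v'
    by_cases h : (v, w) = (v', w')
    · rw [if_pos h, if_pos (show (v, β w) = (v', β w') from
        Prod.ext (Prod.ext_iff.1 h).1 (congrArg β (Prod.ext_iff.1 h).2))]
    · rw [if_neg h, if_neg (fun hh : (v, β w) = (v', β w') =>
        h (Prod.ext (Prod.ext_iff.1 hh).1 (β.injective (Prod.ext_iff.1 hh).2)))]
      have h2 := hγm (v, w) (v', w') h
      simp only [blockPerm_apply, Equiv.Perm.one_apply] at h2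
      rw [h2]

/-- Forward direction for `B` when `A` is transitive. -/
theorem fwdB2 [Nontrivial V] [Nontrivial W]
    {A : Subgroup (Equiv.Perm V)} {B : Subgroup (Equiv.Perm W)}
    (E : Sym2 (V × W) → C) (hE : graphAut E = imprimWr A B)
    (hT : permTransitive A) : IsGR B ∨ IsI2 B := by
  classical
  obtain ⟨v₀⟩ : Nonempty V := inferInstance
  have hconst : ∀ (w w' : W), w ≠ w' → ∀ (v v' u u' : V),
      E s((v, w), (v', w')) = E s((u, w), (u', w')) := by
    intro w w' hww' v v' u u'
    obtain ⟨a, ha, hav⟩ := hT v u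
    obtain ⟨a', ha', hav'⟩ := hT v' u'
    have hγ : blockPerm (fun x => if x = w then a else if x = w' then a' else 1) 1
        ∈ graphAut E := by
      rw [hE]
      refine blockPerm_mem (fun x => ?_) B.one_mem
      by_cases h1 : x = w
      · rw [if_pos h1]; exact ha
      · rw [if_neg h1]
        by_cases h2 : x = w'
        · rw [if_pos h2]; exact ha'
        · rw [if_neg h2]; exact A.one_mem
    have h := hγ (v, w) (v', w') (fun hh => hww' (Prod.ext_iff.1 hh).2)
    rw [show blockPerm (fun x => if x = w then a else if x = w' then a' else 1) 1 (v, w)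
          = (u, w) from by simp [hav],
        show blockPerm (fun x => if x = w then a else if x = w' then a' else 1) 1 (v', w')
          = (u', w') from by simp [Ne.symm hww', hav']] at h
    exact h.symm
  set F : Sym2 W → C := fun p => E (Sym2.map (fun w => (v₀, w)) p) with hF
  set lam : W → V → V → Option C := fun w v v' =>
    if v = v' then none else some (E s((v, w), (v', w))) with hlam
  apply gr_or_i2_of_char B F lam
  intro g
  have hmem : g ∈ B ↔ blockPerm (fun _ => (1 : Equiv.Perm V)) g ∈ imprimWr A B := by
    constructor
    · intro hg
      exact blockPerm_mem (fun _ => A.one_mem) hg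
    · rintro ⟨β, hβ, α, hα, hform⟩
      have : g = β := by
        refine Equiv.ext fun w => ?_
        have h := hform (v₀, w)
        simpa [blockPerm_apply] using (Prod.ext_iff.1 h).2
      rw [this]; exact hβ
  rw [hmem, ← hE]
  constructor
  · intro hγE
    constructor
    · intro w w' hww'
      have h := hγE (v₀, w) (v₀, w') (fun hh => hww' (Prod.ext_iff.1 hh).2)
      simp only [blockPerm_apply, Equiv.Perm.one_apply] at h
      rw [hF]
      dsimp only
      rw [Sym2.map_pair_eq, Sym2.map_pair_eq]
      exact h
    · intro w
      funext v v'
      rw [hlam]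
      dsimp only
      by_cases hv : v = v'
      · rw [if_pos hv, if_pos hv]
      · rw [if_neg hv, if_neg hv]
        have h := hγE (v, w) (v', w) (fun hh => hv (Prod.ext_iff.1 hh).1)
        simp only [blockPerm_apply, Equiv.Perm.one_apply] at h
        rw [h]
  · rintro ⟨hFp, hlamp⟩ p q hpq
    obtain ⟨pv, pw⟩ := p
    obtain ⟨qv, qw⟩ := q
    simp only [blockPerm_apply, Equiv.Perm.one_apply]
    by_cases h : pw = qw
    · subst h
      have hv : pv ≠ qv := fun hh => hpq (by rw [hh])
      have h2 := congrFun (congrFun (hlamp pw) pv) qv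
      rw [hlam] at h2
      dsimp only at h2
      rw [if_neg hv, if_neg hv] at h2
      exact Option.some_injective _ h2
    · calc E s((pv, g pw), (qv, g qw))
          = E s((v₀, g pw), (v₀, g qw)) := hconst _ _ (g.injective.ne h) _ _ _ _
        _ = E s((v₀, pw), (v₀, qw)) := by
            have h3 := hFp pw qw h
            rw [hF] at h3
            dsimp only at h3
            rw [Sym2.map_pair_eq, Sym2.map_pair_eq] at h3
            exact h3
        _ = E s((pv, pw), (qv, qw)) := (hconst _ _ h _ _ _ _).symm

end Aux7
/-- `A ≀ B ∈ GR` iff (`A ∈ GR` or `A = I₂`) and either (`B ∈ GR` or `B = I₂`),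
or (`B ∈ DGR`, `B ∉ GR`, `B ≠ I₂` and `A` is intransitive). -/
theorem stmt7 {V W : Type} [Nontrivial V] [Nontrivial W]
    (A : Subgroup (Equiv.Perm V)) (B : Subgroup (Equiv.Perm W)) :
    IsGR (imprimWr A B) ↔
      (IsGR A ∨ IsI2 A) ∧
        ((IsGR B ∨ IsI2 B) ∨
          (IsDGR B ∧ ¬ IsGR B ∧ ¬ IsI2 B ∧ ¬ permTransitive A)) := by
  constructor
  · rintro ⟨C, E, hE⟩
    refine ⟨fwdA E hE, ?_⟩
    by_cases hT : permTransitive A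
    · exact Or.inl (fwdB2 E hE hT)
    · by_cases hGRB : IsGR B ∨ IsI2 B
      · exact Or.inl hGRB
      · rw [not_or] at hGRB
        exact Or.inr ⟨fwdB1 E hE, hGRB.1, hGRB.2, hT⟩
  · rintro ⟨hA, (hB | hB) | ⟨hDGR, _, _, hnT⟩⟩
    · rcases hA with hA | hA
      · obtain ⟨C1, H1, hH1⟩ := hA
        obtain ⟨C2, H2, hH2⟩ := hB
        exact constrI H1 H2 hH1 hH2
      · obtain ⟨C2, H2, hH2⟩ := hB
        rw [hA.1]
        exact constrII H2 hH2
    · rcases hA with hA | hA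
      · obtain ⟨C1, H1, hH1⟩ := hA
        rw [hB.1]
        exact constrIII H1 hH1
      · rw [hA.1, hB.1]
        exact constrIV
    · obtain ⟨C2, D, hD⟩ := hDGR
      rcases hA with hA | hA
      · obtain ⟨C1, H1, hH1⟩ := hA
        unfold permTransitive at hnT
        push_neg at hnT
        obtain ⟨v₀, v₁, hv⟩ := hnT
        refine constrV_GR H1 D hH1 hD {u | ∃ a ∈ A, a v₀ = u} v₀ v₁
          ⟨1, A.one_mem, Equiv.Perm.one_apply v₀⟩ ?_ ?_
        · rintro ⟨a, ha, hav⟩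
          exact hv a ha hav
        · intro σ hσ v
          constructor
          · rintro ⟨a, ha, hav⟩
            exact ⟨σ⁻¹ * a, A.mul_mem (A.inv_mem hσ) ha, by
              rw [Equiv.Perm.mul_apply, hav]; exact σ.symm_apply_apply v⟩
          · rintro ⟨a, ha, hav⟩
            exact ⟨σ * a, A.mul_mem hσ ha, by rw [Equiv.Perm.mul_apply, hav]⟩
      · obtain ⟨x, y, hxy, huniv⟩ := Nat.card_eq_two_iff.1 hA.2
        have hall : ∀ z : V, z = x ∨ z = y := by
          intro z
          have hz : z ∈ ({x, y} : Set V) := huniv ▸ Set.mem_univ z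
          simpa using hz
        rw [hA.1]
        exact constrV_I2 D hD x y hxy hall
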